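/- arXiv:1910.13514 — 2 statements merged into one kernel-verified Lean document; each statement's English description precedes it below -/
import Mathlib

section
/- Let D be a determining set for L¹(Ω, m) and let W ⊆ L²(Ω, H) be a closed subspace that is multiplicatively invariant with respect to both D and the set of all essentially bounded measurable functions Ω → ℂ. If U : W → L²(Ω, H) is a bounded linear operator satisfying U(gφ) = g·(Uφ) for every g ∈ D and every φ ∈ W, then U(gφ) = g·(Uφ) for every essentially bounded measurable function g : Ω → ℂ and every φ ∈ W. (Theorem 2.2, (1) ⇒ (2).) -/
open MeasureTheory

/-- Pointwise multiplication of `φ ∈ L²(Ω, H)` by a scalar function `g : Ω → ℂ`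
(defined when the product is again in `L²`, and junk `0` otherwise). -/
noncomputable def smulL2 {Ω H : Type*} [MeasurableSpace Ω] {μ : Measure Ω}
    [NormedAddCommGroup H] [InnerProductSpace ℂ H]
    (g : Ω → ℂ) (φ : Lp H 2 μ) : Lp H 2 μ :=
  haveI := Classical.dec (MemLp (fun ω => g ω • (φ : Ω → H) ω) 2 μ)
  if h : MemLp (fun ω => g ω • (φ : Ω → H) ω) 2 μ then h.toLp _ else 0

section Aux

local notation "⟪" x ", " y "⟫" => @inner ℂ _ _ x y

variable {Ω H : Type*} [MeasurableSpace Ω] {μ : Measure Ω}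
  [NormedAddCommGroup H] [InnerProductSpace ℂ H]

lemma memℒp_smul_of_bdd {g : Ω → ℂ} (hg : Measurable g) {C : ℝ}
    (hC : ∀ᵐ ω ∂μ, ‖g ω‖ ≤ C) (φ : Lp H 2 μ) :
    MemLp (fun ω => g ω • (φ : Ω → H) ω) 2 μ := by
  refine MemLp.of_le_mul (c := C) (Lp.memLp φ)
    (hg.aestronglyMeasurable.smul (Lp.aestronglyMeasurable φ)) ?_
  filter_upwards [hC] with ω hω
  rw [norm_smul]
  exact mul_le_mul_of_nonneg_right hω (norm_nonneg _)

lemma smulL2_coeFn (g : Ω → ℂ) (φ : Lp H 2 μ)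
    (h : MemLp (fun ω => g ω • (φ : Ω → H) ω) 2 μ) :
    (smulL2 g φ : Ω → H) =ᵐ[μ] fun ω => g ω • (φ : Ω → H) ω := by
  rw [smulL2, dif_pos h]
  exact h.coeFn_toLp

lemma inner_smulL2 (g : Ω → ℂ) (φ ψ : Lp H 2 μ)
    (h : MemLp (fun ω => g ω • (φ : Ω → H) ω) 2 μ) :
    ⟪ψ, smulL2 g φ⟫ = ∫ ω, g ω * ⟪(ψ : Ω → H) ω, (φ : Ω → H) ω⟫ ∂μ := by
  rw [L2.inner_def]
  refine integral_congr_ae ?_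
  filter_upwards [smulL2_coeFn g φ h] with ω hω
  rw [hω, inner_smul_right]

end Aux

set_option synthInstance.maxHeartbeats 1000000 in
set_option maxHeartbeats 2000000 in
/-- **Theorem 2.2, (1) ⇒ (2).** -/
theorem translation_preserving_stmt0
    {Ω H : Type*} [MeasurableSpace Ω] (μ : Measure Ω) [SigmaFinite μ]
    [NormedAddCommGroup H] [InnerProductSpace ℂ H] [CompleteSpace H]
    [TopologicalSpace.SeparableSpace H]
    [TopologicalSpace.SeparableSpace (Lp ℂ 2 μ)]
    -- `D` is a set of essentially bounded measurable functions:
    (D : Set (Ω → ℂ))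
    (hDmeas : ∀ g ∈ D, Measurable g)
    (hDbdd : ∀ g ∈ D, ∃ C : ℝ, ∀ᵐ ω ∂μ, ‖g ω‖ ≤ C)
    -- `D` is a determining set for `L¹(Ω, m)`:
    (hDdet : ∀ f : Ω → ℂ, Integrable f μ →
      (∀ g ∈ D, ∫ ω, f ω * g ω ∂μ = 0) → f =ᵐ[μ] 0)
    -- `W` is a closed subspace of `L²(Ω, H)`:
    (W : Submodule ℂ (Lp H 2 μ)) (hWclosed : IsClosed (W : Set (Lp H 2 μ)))
    -- `W` is multiplicatively invariant with respect to `D`: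
    (hWinvD : ∀ g ∈ D, ∀ φ ∈ W, smulL2 g φ ∈ W)
    -- `W` is multiplicatively invariant with respect to all essentially bounded
    -- measurable functions:
    (hWinv : ∀ g : Ω → ℂ, Measurable g → (∃ C : ℝ, ∀ᵐ ω ∂μ, ‖g ω‖ ≤ C) →
      ∀ φ ∈ W, smulL2 g φ ∈ W)
    -- `U : W → L²(Ω, H)` is a bounded linear operator, multiplication preserving
    -- with respect to `D`:
    (U : W →L[ℂ] Lp H 2 μ)
    (hU : ∀ g ∈ D, ∀ φ : W, ∀ h : smulL2 g (φ : Lp H 2 μ) ∈ W,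
      U ⟨smulL2 g (φ : Lp H 2 μ), h⟩ = smulL2 g (U φ)) :
    -- then `U` is multiplication preserving with respect to every essentially bounded
    -- measurable function:
    ∀ g : Ω → ℂ, Measurable g → (∃ C : ℝ, ∀ᵐ ω ∂μ, ‖g ω‖ ≤ C) →
      ∀ φ : W, ∀ h : smulL2 g (φ : Lp H 2 μ) ∈ W,
        U ⟨smulL2 g (φ : Lp H 2 μ), h⟩ = smulL2 g (U φ) := by
  classical
  haveI : CompleteSpace W := hWclosed.completeSpace_coe
  intro g hg hgbdd φ hmem
  obtain ⟨C, hC⟩ := hgbdd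
  set U' := ContinuousLinearMap.adjoint U with hU'
  refine ext_inner_left ℂ (fun η => ?_)
  set f₁ : Ω → ℂ := fun ω => @inner ℂ _ _ ((((U' η : W) : Lp H 2 μ) : Ω → H) ω)
      (((φ : Lp H 2 μ) : Ω → H) ω) with hf₁def
  set f₂ : Ω → ℂ := fun ω => @inner ℂ _ _ ((η : Ω → H) ω) (((U φ) : Ω → H) ω) with hf₂def
  have hf₁ : Integrable f₁ μ := L2.integrable_inner ((U' η : W) : Lp H 2 μ) (φ : Lp H 2 μ)
  have hf₂ : Integrable f₂ μ := L2.integrable_inner η (U φ)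
  -- key formula: for any bounded measurable `k` with `k•φ ∈ W`,
  -- ⟪η, U (k•φ)⟫ = ∫ k f₁
  have key : ∀ (k : Ω → ℂ), MemLp (fun ω => k ω • ((φ : Lp H 2 μ) : Ω → H) ω) 2 μ →
      ∀ hkW : smulL2 k (φ : Lp H 2 μ) ∈ W,
      @inner ℂ _ _ η (U ⟨smulL2 k (φ : Lp H 2 μ), hkW⟩) = ∫ ω, k ω * f₁ ω ∂μ := by
    intro k hk hkW
    have h1 : @inner ℂ _ _ η (U ⟨smulL2 k (φ : Lp H 2 μ), hkW⟩)
        = @inner ℂ _ _ (U' η) (⟨smulL2 k (φ : Lp H 2 μ), hkW⟩ : W) :=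
      (ContinuousLinearMap.adjoint_inner_left U _ _).symm
    rw [h1]
    have h2 : @inner ℂ _ _ (U' η) (⟨smulL2 k (φ : Lp H 2 μ), hkW⟩ : W)
        = @inner ℂ _ _ ((U' η : W) : Lp H 2 μ) (smulL2 k (φ : Lp H 2 μ)) := rfl
    rw [h2, inner_smulL2 _ _ _ hk]
  -- the two L¹ functions agree a.e. thanks to the determining set
  have hfeq : f₁ =ᵐ[μ] f₂ := by
    have hsub : (fun ω => f₁ ω - f₂ ω) =ᵐ[μ] 0 := by
      refine hDdet _ (hf₁.sub hf₂) ?_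
      intro h hD
      obtain ⟨Ch, hCh⟩ := hDbdd h hD
      have hhm := hDmeas h hD
      have hmemh := memℒp_smul_of_bdd (μ := μ) hhm hCh (φ : Lp H 2 μ)
      have hWh := hWinvD h hD (φ : Lp H 2 μ) φ.2
      have e1 : @inner ℂ _ _ η (U ⟨smulL2 h (φ : Lp H 2 μ), hWh⟩) = ∫ ω, h ω * f₁ ω ∂μ :=
        key h hmemh hWh
      have e2 : @inner ℂ _ _ η (smulL2 h (U φ)) = ∫ ω, h ω * f₂ ω ∂μ :=
        inner_smulL2 h (U φ) η (memℒp_smul_of_bdd hhm hCh (U φ))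
      rw [hU h hD φ hWh, e2] at e1
      have hint1 : Integrable (fun ω => h ω * f₁ ω) μ :=
        hf₁.bdd_mul hhm.aestronglyMeasurable hCh
      have hint2 : Integrable (fun ω => h ω * f₂ ω) μ :=
        hf₂.bdd_mul hhm.aestronglyMeasurable hCh
      have : ∫ ω, (f₁ ω - f₂ ω) * h ω ∂μ
          = (∫ ω, h ω * f₁ ω ∂μ) - ∫ ω, h ω * f₂ ω ∂μ := by
        rw [← integral_sub hint1 hint2]
        refine integral_congr_ae (Filter.Eventually.of_forall fun ω => ?_)
        ring
      rw [this, e1, sub_self]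
    filter_upwards [hsub] with ω hω
    exact sub_eq_zero.mp hω
  -- conclude
  rw [key g (memℒp_smul_of_bdd hg hC (φ : Lp H 2 μ)) hmem,
    inner_smulL2 g (U φ) η (memℒp_smul_of_bdd hg hC (U φ))]
  refine integral_congr_ae ?_
  filter_upwards [hfeq] with ω hω
  rw [hf₁def] at hω ⊢
  rw [hω]
end

section
/- Let J be a measurable range function, let W ⊆ L²(Ω, H) be the closed subspace corresponding to J, and let R be a measurable range operator on J with M := ess sup_{ω ∈ Ω} ‖R(ω)∘P_J(ω)‖ < ∞. Then there exists a bounded linear operator U : W → L²(Ω, H) such that (Uφ)(ω) = R(ω)(φ(ω)) for a.e. ω ∈ Ω, for every φ ∈ W; this U is multiplication preserving with respect to all essentially bounded measurable functions, and ‖U‖ = M. (Theorem 2.2, converse part with norm identity.) -/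
open MeasureTheory
open scoped ENNReal NNReal

/-- The orthogonal projection of `H` onto a closed subspace `K`, as a map `H →L[ℂ] H`
(junk `0` if `K` is not closed). -/
noncomputable def projCLM {H : Type*} [NormedAddCommGroup H] [InnerProductSpace ℂ H]
    [CompleteSpace H] (K : Submodule ℂ H) : H →L[ℂ] H :=
  haveI := Classical.dec (IsClosed (K : Set H))
  if h : IsClosed (K : Set H) then
    haveI : CompleteSpace K := h.completeSpace_coe
    K.subtypeL.comp (K.orthogonalProjectionOnto)
  else 0

/-- The subspace `W = {φ ∈ L²(Ω, H) : φ(ω) ∈ J(ω) for a.e. ω}` corresponding to a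
range function `J`. -/
noncomputable def rangeSubmodule {Ω H : Type*} [MeasurableSpace Ω] (μ : Measure Ω)
    [NormedAddCommGroup H] [InnerProductSpace ℂ H]
    (J : Ω → Submodule ℂ H) : Submodule ℂ (Lp H 2 μ) where
  carrier := {φ | ∀ᵐ ω ∂μ, (φ : Ω → H) ω ∈ J ω}
  add_mem' := by
    intro φ ψ hφ hψ
    simp only [Set.mem_setOf_eq] at *
    filter_upwards [Lp.coeFn_add φ ψ, hφ, hψ] with ω h1 h2 h3
    rw [h1]; exact (J ω).add_mem h2 h3
  zero_mem' := by
    simp only [Set.mem_setOf_eq]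
    filter_upwards [Lp.coeFn_zero H 2 μ] with ω h
    rw [h]; exact (J ω).zero_mem
  smul_mem' := by
    intro c φ hφ
    simp only [Set.mem_setOf_eq] at *
    filter_upwards [Lp.coeFn_smul c φ, hφ] with ω h1 h2
    rw [h1]; exact (J ω).smul_mem c h2

lemma norm_eq_iSup_inner' {H : Type*} [NormedAddCommGroup H] [InnerProductSpace ℂ H]
    (v : ℕ → H) (hv : DenseRange v) (x : H) :
    ‖x‖ = ⨆ n, (if ‖v n‖ ≤ 1 then (inner ℂ x (v n) : ℂ).re else 0) := by
  set F : ℕ → ℝ := fun n => if ‖v n‖ ≤ 1 then (inner ℂ x (v n) : ℂ).re else 0 with hF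
  have hb : ∀ n, F n ≤ ‖x‖ := by
    intro n
    simp only [hF]
    split_ifs with h
    · calc (inner ℂ x (v n) : ℂ).re ≤ |(inner ℂ x (v n) : ℂ).re| := le_abs_self _
        _ ≤ ‖(inner ℂ x (v n) : ℂ)‖ := Complex.abs_re_le_norm _
        _ = ‖(inner ℂ x (v n) : ℂ)‖ := rfl
        _ ≤ ‖x‖ * ‖v n‖ := norm_inner_le_norm _ _
        _ ≤ ‖x‖ * 1 := by gcongr
        _ = ‖x‖ := mul_one _
    · exact norm_nonneg x
  have hbdd : BddAbove (Set.range F) := ⟨‖x‖, by rintro _ ⟨n, rfl⟩; exact hb n⟩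
  refine le_antisymm ?_ (ciSup_le hb)
  refine le_of_forall_pos_le_add fun ε hε => ?_
  rcases eq_or_ne x 0 with rfl | hx
  · have h0 : F 0 ≤ ⨆ n, F n := le_ciSup hbdd 0
    have hF0 : F 0 = 0 := by simp [hF]
    simp only [norm_zero]
    linarith
  · set r := ‖x‖ with hr
    have hrpos : 0 < r := norm_pos_iff.2 hx
    set δ : ℝ := min (ε / (2 * r)) (1 / 2) with hδ
    have hδpos : 0 < δ := lt_min (by positivity) (by norm_num)
    have hδε : δ ≤ ε / (2 * r) := min_le_left _ _
    have hδ1 : δ ≤ 1 / 2 := min_le_right _ _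
    set u : H := (((1 - δ) / r : ℝ) : ℂ) • x with hu
    have hunorm : ‖u‖ = 1 - δ := by
      rw [hu, norm_smul]
      simp only [Complex.norm_real]
      rw [Real.norm_eq_abs, abs_of_nonneg (div_nonneg (by linarith) hrpos.le)]
      field_simp
      rfl
    obtain ⟨n, hn⟩ : ∃ n, v n ∈ Metric.ball u δ :=
      hv.exists_mem_open Metric.isOpen_ball ⟨u, Metric.mem_ball_self hδpos⟩
    have hdist : ‖v n - u‖ < δ := by
      rw [← dist_eq_norm]; exact Metric.mem_ball.1 hn
    have h1 : ‖v n‖ ≤ 1 := by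
      calc ‖v n‖ = ‖u + (v n - u)‖ := by rw [add_sub_cancel]
        _ ≤ ‖u‖ + ‖v n - u‖ := norm_add_le _ _
        _ ≤ (1 - δ) + δ := by rw [hunorm]; linarith
        _ = 1 := by ring
    have hinneru : (inner ℂ x u : ℂ).re = (1 - δ) * r := by
      have hxx : (inner ℂ x x : ℂ).re = ‖x‖ ^ 2 := by
        simpa using inner_self_eq_norm_sq (𝕜 := ℂ) x
      rw [hu, inner_smul_right, Complex.re_ofReal_mul, hxx, ← hr]
      field_simp
    have hsplit : (inner ℂ x (v n) : ℂ).re = (inner ℂ x u : ℂ).re + (inner ℂ x (v n - u) : ℂ).re := by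
      rw [← Complex.add_re, ← inner_add_right, add_sub_cancel]
    have herr : -(r * δ) ≤ (inner ℂ x (v n - u) : ℂ).re := by
      have hno : ‖(inner ℂ x (v n - u) : ℂ)‖ ≤ r * δ := by
        calc ‖(inner ℂ x (v n - u) : ℂ)‖ ≤ ‖x‖ * ‖v n - u‖ := norm_inner_le_norm _ _
          _ ≤ r * δ := by rw [← hr]; exact mul_le_mul_of_nonneg_left hdist.le hrpos.le
      have habs : |(inner ℂ x (v n - u) : ℂ).re| ≤ r * δ :=
        le_trans (Complex.abs_re_le_norm _) hno
      linarith [neg_abs_le ((inner ℂ x (v n - u) : ℂ).re)]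
    have h2 : r - ε ≤ (inner ℂ x (v n) : ℂ).re := by
      have h2rδ : 2 * r * δ ≤ ε := by
        have := mul_le_mul_of_nonneg_left hδε (by positivity : (0:ℝ) ≤ 2 * r)
        calc 2 * r * δ ≤ 2 * r * (ε / (2 * r)) := this
          _ = ε := by field_simp
      rw [hsplit, hinneru]
      nlinarith
    have hFn : r - ε ≤ F n := by
      simp only [hF, if_pos h1]; exact h2
    calc ‖x‖ = r := hr
      _ ≤ F n + ε := by linarith
      _ ≤ (⨆ n, F n) + ε := by have := le_ciSup hbdd n; linarith

lemma pettis_sm {Ω : Type*} [MeasurableSpace Ω] {H : Type*} [NormedAddCommGroup H]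
    [InnerProductSpace ℂ H] [TopologicalSpace.SeparableSpace H]
    (h : Ω → H) (hm : ∀ b : H, Measurable fun ω => (inner ℂ (h ω) b : ℂ)) :
    StronglyMeasurable h := by
  haveI : Nonempty H := ⟨0⟩
  set v := TopologicalSpace.denseSeq H with hvdef
  have hv : DenseRange v := TopologicalSpace.denseRange_denseSeq H
  have hd : ∀ c : H, Measurable fun ω => ‖h ω - c‖ := by
    intro c
    have heq : (fun ω => ‖h ω - c‖) =
        fun ω => ⨆ n, (if ‖v n‖ ≤ 1 then (inner ℂ (h ω - c) (v n) : ℂ).re else 0) :=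
      funext fun ω => norm_eq_iSup_inner' v hv _
    rw [heq]
    refine Measurable.iSup fun n => ?_
    by_cases hn : ‖v n‖ ≤ 1
    · simp only [if_pos hn]
      have : (fun ω => (inner ℂ (h ω - c) (v n) : ℂ)) =
          fun ω => (inner ℂ (h ω) (v n) : ℂ) - (inner ℂ c (v n) : ℂ) :=
        funext fun ω => by rw [inner_sub_left]
      exact Complex.measurable_re.comp (by rw [this]; exact (hm (v n)).sub measurable_const)
    · simp only [if_neg hn]; exact measurable_const
  borelize H
  haveI : SecondCountableTopology H := UniformSpace.secondCountable_of_separable H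
  have hmeas : Measurable h := by
    refine measurable_generateFrom fun t ht => ?_
    have ht' : IsOpen t := ht
    have hteq : h ⁻¹' t = ⋃ n, ⋃ q : ℚ,
        {ω | ((0:ℝ) < q ∧ Metric.ball (v n) q ⊆ t) ∧ dist (h ω) (v n) < q} := by
      ext ω
      simp only [Set.mem_preimage, Set.mem_iUnion, Set.mem_setOf_eq]
      constructor
      · intro hω
        rcases Metric.isOpen_iff.1 ht' _ hω with ⟨r, hr, hball⟩
        rcases Metric.denseRange_iff.1 hv (h ω) (r / 2) (by linarith) with ⟨n, hn⟩
        rcases exists_rat_btwn hn with ⟨q, hq1, hq2⟩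
        refine ⟨n, q, ⟨lt_of_le_of_lt dist_nonneg hq1, fun y hy => hball ?_⟩, hq1⟩
        have hy' : dist y (v n) < (q : ℝ) := Metric.mem_ball.1 hy
        have : dist y (h ω) ≤ dist y (v n) + dist (v n) (h ω) := dist_triangle _ _ _
        rw [dist_comm (v n) (h ω)] at this
        exact Metric.mem_ball.2 (by linarith)
      · rintro ⟨n, q, ⟨hq0, hsub⟩, hdist⟩
        exact hsub (Metric.mem_ball.2 hdist)
    rw [hteq]
    refine MeasurableSet.iUnion fun n => MeasurableSet.iUnion fun q => ?_
    by_cases hc : (0:ℝ) < q ∧ Metric.ball (v n) q ⊆ t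
    · simp only [hc, true_and]
      have : Measurable fun ω => dist (h ω) (v n) := by
        simpa [dist_eq_norm] using hd (v n)
      exact measurableSet_lt this measurable_const
    · have : {ω | ((0:ℝ) < q ∧ Metric.ball (v n) q ⊆ t) ∧ dist (h ω) (v n) < q} = ∅ := by
        ext ω
        simp only [Set.mem_setOf_eq, Set.mem_empty_iff_false, iff_false]
        rintro ⟨hP, _⟩
        exact hc hP
      rw [this]; exact MeasurableSet.empty
  exact hmeas.stronglyMeasurable

lemma sm_apply_clm {Ω H : Type*} [MeasurableSpace Ω] [NormedAddCommGroup H]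
    [InnerProductSpace ℂ H]
    (T : Ω → H →L[ℂ] H) (hT : ∀ a : H, StronglyMeasurable fun ω => T ω a)
    {f : Ω → H} (hf : StronglyMeasurable f) :
    StronglyMeasurable fun ω => T ω (f ω) := by
  have key : ∀ s : SimpleFunc Ω H, StronglyMeasurable fun ω => T ω (s ω) := by
    intro s
    induction s using SimpleFunc.induction with
    | @const c s' hs =>
      have : (fun ω => T ω ((SimpleFunc.piecewise s' hs (SimpleFunc.const Ω c)
          (SimpleFunc.const Ω 0)) ω)) = fun ω => Set.indicator s' (fun ω => T ω c) ω := by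
        funext ω
        simp only [SimpleFunc.coe_piecewise, SimpleFunc.coe_const, Set.piecewise, Set.indicator]
        split_ifs <;> simp
      rw [this]
      exact (hT c).indicator hs
    | @add f g hfg hf hg =>
      have : (fun ω => T ω ((f + g) ω)) = fun ω => T ω (f ω) + T ω (g ω) :=
        funext fun ω => by simp [SimpleFunc.coe_add, map_add]
      rw [this]; exact hf.add hg
  exact stronglyMeasurable_of_tendsto _ (fun n => key (hf.approx n))
    (tendsto_pi_nhds.2 fun ω => ((T ω).continuous.tendsto _).comp (hf.tendsto_approx ω))

section projlemmas
variable {H : Type*} [NormedAddCommGroup H] [InnerProductSpace ℂ H] [CompleteSpace H]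
  {K : Submodule ℂ H}

lemma projCLM_of_isClosed (hK : IsClosed (K : Set H)) :
    haveI : CompleteSpace K := hK.completeSpace_coe
    projCLM K = K.subtypeL.comp (K.orthogonalProjectionOnto) := by
  rw [projCLM, dif_pos hK]

lemma projCLM_apply_mem (hK : IsClosed (K : Set H)) (x : H) : projCLM K x ∈ K := by
  haveI : CompleteSpace K := hK.completeSpace_coe
  rw [projCLM_of_isClosed hK]
  exact (K.orthogonalProjectionOnto x).2

lemma projCLM_apply_of_mem (hK : IsClosed (K : Set H)) {x : H} (hx : x ∈ K) :
    projCLM K x = x := by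
  haveI : CompleteSpace K := hK.completeSpace_coe
  rw [projCLM_of_isClosed hK]
  show ((K.orthogonalProjectionOnto x : K) : H) = x
  rw [show x = ((⟨x, hx⟩ : K) : H) from rfl, Submodule.orthogonalProjectionOnto_mem_subspace_eq_self]

lemma projCLM_norm_le (hK : IsClosed (K : Set H)) (x : H) : ‖projCLM K x‖ ≤ ‖x‖ := by
  haveI : CompleteSpace K := hK.completeSpace_coe
  rw [projCLM_of_isClosed hK]
  show ‖((K.orthogonalProjectionOnto x : K) : H)‖ ≤ ‖x‖
  calc ‖((K.orthogonalProjectionOnto x : K) : H)‖ = ‖K.orthogonalProjectionOnto x‖ := rfl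
    _ ≤ ‖K.orthogonalProjectionOnto‖ * ‖x‖ := (K.orthogonalProjectionOnto).le_opNorm x
    _ ≤ 1 * ‖x‖ := by gcongr; exact K.orthogonalProjectionOnto_norm_le
    _ = ‖x‖ := one_mul _

end projlemmas

set_option maxHeartbeats 1000000 in
/-- **Theorem 2.2, converse part (with the norm identity).** Let `J` be a measurable range
function with corresponding closed subspace `W ⊆ L²(Ω, H)`, and let `R` be a measurable
range operator on `J` with `M := ess sup_ω ‖R(ω) ∘ P_J(ω)‖ < ∞`. Then there is a bounded
linear operator `U : W → L²(Ω, H)` with `(Uφ)(ω) = R(ω)(φ(ω))` a.e. for every `φ ∈ W`;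
it is multiplication preserving with respect to all essentially bounded measurable
functions, and `‖U‖ = M`. -/
theorem translation_preserving_stmt2
    {Ω H : Type*} [MeasurableSpace Ω] (μ : Measure Ω) [SigmaFinite μ]
    [NormedAddCommGroup H] [InnerProductSpace ℂ H] [CompleteSpace H]
    [TopologicalSpace.SeparableSpace H]
    [TopologicalSpace.SeparableSpace (Lp ℂ 2 μ)]
    -- `J` is a measurable range function:
    (J : Ω → Submodule ℂ H)
    (hJclosed : ∀ ω, IsClosed ((J ω : Set H)))
    (hJmeas : ∀ a b : H, Measurable fun ω => (inner ℂ (projCLM (J ω) a) b : ℂ))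
    -- `R` is a measurable range operator on `J`:
    (R : Ω → H →L[ℂ] H)
    (hR : ∀ᵐ ω ∂μ, ∀ a : H, R ω a = R ω (projCLM (J ω) a))
    (hRmeas : ∀ a b : H, Measurable fun ω => (inner ℂ (R ω (projCLM (J ω) a)) b : ℂ))
    -- `M := ess sup_ω ‖R(ω) ∘ P_J(ω)‖ < ∞`:
    (hM : essSup (fun ω => (‖(R ω).comp (projCLM (J ω))‖₊ : ℝ≥0∞)) μ < ⊤) :
    ∃ U : rangeSubmodule μ J →L[ℂ] Lp H 2 μ,
      -- `(Uφ)(ω) = R(ω)(φ(ω))` a.e., for every `φ ∈ W`: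
      (∀ φ : rangeSubmodule μ J,
        ∀ᵐ ω ∂μ, (U φ : Lp H 2 μ) ω = R ω ((φ : Lp H 2 μ) ω)) ∧
      -- `U` is multiplication preserving with respect to all essentially bounded
      -- measurable functions:
      (∀ g : Ω → ℂ, Measurable g → (∃ C : ℝ, ∀ᵐ ω ∂μ, ‖g ω‖ ≤ C) →
        ∀ φ : rangeSubmodule μ J, ∀ h : smulL2 g (φ : Lp H 2 μ) ∈ rangeSubmodule μ J,
          U ⟨smulL2 g (φ : Lp H 2 μ), h⟩ = smulL2 g (U φ)) ∧
      -- `‖U‖ = M`: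
      ‖U‖ = (essSup (fun ω => (‖(R ω).comp (projCLM (J ω))‖₊ : ℝ≥0∞)) μ).toReal := by
  classical
  set T : Ω → H →L[ℂ] H := fun ω => (R ω).comp (projCLM (J ω)) with hTdef
  set Minf : ℝ≥0∞ := essSup (fun ω => (‖T ω‖₊ : ℝ≥0∞)) μ with hMinfdef
  set Mr : ℝ := Minf.toReal with hMrdef
  have hMfin : Minf ≠ ⊤ := hM.ne
  have hMr0 : (0:ℝ) ≤ Mr := ENNReal.toReal_nonneg
  have hTsm : ∀ a : H, StronglyMeasurable fun ω => T ω a := fun a =>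
    pettis_sm _ (fun b => hRmeas a b)
  have hPsm : ∀ a : H, StronglyMeasurable fun ω => projCLM (J ω) a := fun a =>
    pettis_sm _ (fun b => hJmeas a b)
  have hTle : ∀ᵐ ω ∂μ, ‖T ω‖ ≤ Mr := by
    filter_upwards [ENNReal.ae_le_essSup (μ := μ) (fun ω => (‖T ω‖₊ : ℝ≥0∞))] with ω hω
    have h2 : ((‖T ω‖₊ : ℝ≥0∞)).toReal ≤ Minf.toReal := ENNReal.toReal_mono hMfin hω
    simpa using h2
  have hsmT : ∀ φ : Lp H 2 μ, AEStronglyMeasurable (fun ω => T ω ((φ : Ω → H) ω)) μ := by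
    intro φ
    obtain ⟨f, hfsm, hfe⟩ := Lp.aestronglyMeasurable φ
    exact ⟨fun ω => T ω (f ω), sm_apply_clm T hTsm hfsm,
      hfe.mono fun ω hω => by dsimp only; rw [hω]⟩
  have hbd : ∀ φ : Lp H 2 μ, ∀ᵐ ω ∂μ,
      ‖T ω ((φ : Ω → H) ω)‖ ≤ Mr * ‖(φ : Ω → H) ω‖ := by
    intro φ
    filter_upwards [hTle] with ω hω
    calc ‖T ω ((φ : Ω → H) ω)‖ ≤ ‖T ω‖ * ‖(φ : Ω → H) ω‖ := (T ω).le_opNorm _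
      _ ≤ Mr * ‖(φ : Ω → H) ω‖ := mul_le_mul_of_nonneg_right hω (norm_nonneg _)
  have hmem : ∀ φ : Lp H 2 μ, MemLp (fun ω => T ω ((φ : Ω → H) ω)) 2 μ := fun φ =>
    MemLp.of_le_mul (Lp.memLp φ) (hsmT φ) (hbd φ)
  let L : rangeSubmodule μ J →ₗ[ℂ] Lp H 2 μ :=
    { toFun := fun φ => (hmem (φ : Lp H 2 μ)).toLp _
      map_add' := by
        intro φ ψ
        apply Lp.ext
        have hc : ((φ + ψ : rangeSubmodule μ J) : Lp H 2 μ)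
            = (φ : Lp H 2 μ) + (ψ : Lp H 2 μ) := rfl
        filter_upwards [MemLp.coeFn_toLp (hmem ((φ + ψ : rangeSubmodule μ J) : Lp H 2 μ)),
          MemLp.coeFn_toLp (hmem (φ : Lp H 2 μ)), MemLp.coeFn_toLp (hmem (ψ : Lp H 2 μ)),
          Lp.coeFn_add ((hmem (φ : Lp H 2 μ)).toLp _) ((hmem (ψ : Lp H 2 μ)).toLp _),
          Lp.coeFn_add ((φ : Lp H 2 μ)) ((ψ : Lp H 2 μ))] with ω e1 e2 e3 e4 e5
        rw [e1, e4, Pi.add_apply, e2, e3, hc, e5, Pi.add_apply]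
        exact (T ω).map_add _ _
      map_smul' := by
        intro c φ
        apply Lp.ext
        have hc : ((c • φ : rangeSubmodule μ J) : Lp H 2 μ) = c • (φ : Lp H 2 μ) := rfl
        filter_upwards [MemLp.coeFn_toLp (hmem ((c • φ : rangeSubmodule μ J) : Lp H 2 μ)),
          MemLp.coeFn_toLp (hmem (φ : Lp H 2 μ)),
          Lp.coeFn_smul c ((hmem (φ : Lp H 2 μ)).toLp _),
          Lp.coeFn_smul c ((φ : Lp H 2 μ))] with ω e1 e2 e3 e4
        rw [RingHom.id_apply, e1, e3, Pi.smul_apply, e2, hc, e4, Pi.smul_apply]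
        exact (T ω).map_smul c _ }
  have hLle : ∀ φ : rangeSubmodule μ J, ‖L φ‖ ≤ Mr * ‖φ‖ := by
    intro φ
    have hnn : ∀ᵐ ω ∂μ, ‖T ω (((φ : Lp H 2 μ) : Ω → H) ω)‖₊
        ≤ Minf.toNNReal * ‖((φ : Lp H 2 μ) : Ω → H) ω‖₊ := by
      filter_upwards [hbd (φ : Lp H 2 μ)] with ω hω
      have hcast : ((Minf.toNNReal * ‖((φ : Lp H 2 μ) : Ω → H) ω‖₊ : ℝ≥0) : ℝ)
          = Mr * ‖((φ : Lp H 2 μ) : Ω → H) ω‖ := by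
        push_cast
        rfl
      rw [← NNReal.coe_le_coe, coe_nnnorm, hcast]
      exact hω
    have key := eLpNorm_le_nnreal_smul_eLpNorm_of_ae_le_mul hnn 2
    have hLnorm : ‖L φ‖ = (eLpNorm (fun ω => T ω (((φ : Lp H 2 μ) : Ω → H) ω)) 2 μ).toReal := by
      rw [show L φ = (hmem ((φ : Lp H 2 μ))).toLp _ from rfl, Lp.norm_toLp]
    have hφn : ‖φ‖ = (eLpNorm (((φ : Lp H 2 μ) : Ω → H)) 2 μ).toReal := Lp.norm_def _
    rw [hLnorm, hφn]
    have hfin : (Minf.toNNReal : ℝ≥0∞) * eLpNorm (((φ : Lp H 2 μ) : Ω → H)) 2 μ ≠ ⊤ :=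
      ENNReal.mul_ne_top ENNReal.coe_ne_top (Lp.eLpNorm_ne_top _)
    have h2 := ENNReal.toReal_mono hfin (by simpa [ENNReal.smul_def] using key)
    rw [ENNReal.toReal_mul, ENNReal.coe_toReal] at h2
    exact h2
  let U : rangeSubmodule μ J →L[ℂ] Lp H 2 μ := L.mkContinuous Mr hLle
  have hUapply : ∀ φ : rangeSubmodule μ J, U φ = (hmem (φ : Lp H 2 μ)).toLp _ := fun φ => rfl
  have hU1 : ∀ φ : rangeSubmodule μ J,
      ∀ᵐ ω ∂μ, (U φ : Lp H 2 μ) ω = R ω (((φ : Lp H 2 μ) : Ω → H) ω) := by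
    intro φ
    have h1 : ⇑(U φ) =ᵐ[μ] fun ω => T ω (((φ : Lp H 2 μ) : Ω → H) ω) := by
      rw [hUapply φ]; exact MemLp.coeFn_toLp _
    filter_upwards [h1, hR] with ω e1 e2
    rw [e1]
    exact (e2 (((φ : Lp H 2 μ) : Ω → H) ω)).symm
  refine ⟨U, hU1, ?_, ?_⟩
  · intro g hg hgbd φ hmemW
    obtain ⟨C, hC⟩ := hgbd
    have hC' : ∀ᵐ ω ∂μ, ‖g ω‖ ≤ max C 0 := hC.mono fun ω h => le_trans h (le_max_left _ _)
    have hgsm1 : AEStronglyMeasurable (fun ω => g ω • ((φ : Lp H 2 μ) : Ω → H) ω) μ :=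
      hg.aemeasurable.aestronglyMeasurable.smul (Lp.aestronglyMeasurable _)
    have hgsm2 : AEStronglyMeasurable (fun ω => g ω • (U φ : Lp H 2 μ) ω) μ :=
      hg.aemeasurable.aestronglyMeasurable.smul (Lp.aestronglyMeasurable _)
    have hmg1 : MemLp (fun ω => g ω • ((φ : Lp H 2 μ) : Ω → H) ω) 2 μ := by
      refine MemLp.of_le_mul (c := max C 0) (Lp.memLp ((φ : Lp H 2 μ))) hgsm1 ?_
      filter_upwards [hC'] with ω h
      rw [norm_smul]
      exact mul_le_mul_of_nonneg_right h (norm_nonneg _)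
    have hmg2 : MemLp (fun ω => g ω • (U φ : Lp H 2 μ) ω) 2 μ := by
      refine MemLp.of_le_mul (c := max C 0) (Lp.memLp (U φ)) hgsm2 ?_
      filter_upwards [hC'] with ω h
      rw [norm_smul]
      exact mul_le_mul_of_nonneg_right h (norm_nonneg _)
    have hsmul1 : smulL2 g ((φ : Lp H 2 μ)) = hmg1.toLp _ := by
      rw [smulL2, dif_pos hmg1]
    have hsmul2 : smulL2 g (U φ) = hmg2.toLp _ := by
      rw [smulL2, dif_pos hmg2]
    have hB : ⇑(smulL2 g ((φ : Lp H 2 μ))) =ᵐ[μ] fun ω => g ω • ((φ : Lp H 2 μ) : Ω → H) ω := by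
      rw [hsmul1]; exact MemLp.coeFn_toLp _
    have hCc : ⇑(smulL2 g (U φ)) =ᵐ[μ] fun ω => g ω • (U φ : Lp H 2 μ) ω := by
      rw [hsmul2]; exact MemLp.coeFn_toLp _
    apply Lp.ext
    have hcoe1 : ((⟨smulL2 g ((φ : Lp H 2 μ)), hmemW⟩ : rangeSubmodule μ J) : Lp H 2 μ)
        = smulL2 g ((φ : Lp H 2 μ)) := rfl
    filter_upwards [hU1 ⟨smulL2 g ((φ : Lp H 2 μ)), hmemW⟩, hB, hCc, hU1 φ] with ω e1 e2 e3 e4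
    calc (U ⟨smulL2 g ((φ : Lp H 2 μ)), hmemW⟩ : Lp H 2 μ) ω
        = R ω ((smulL2 g ((φ : Lp H 2 μ)) : Ω → H) ω) := by rw [e1]
      _ = R ω (g ω • ((φ : Lp H 2 μ) : Ω → H) ω) := by rw [e2]
      _ = g ω • R ω (((φ : Lp H 2 μ) : Ω → H) ω) := (R ω).map_smul _ _
      _ = g ω • (U φ : Lp H 2 μ) ω := by rw [e4]
      _ = (smulL2 g (U φ) : Ω → H) ω := e3.symm
  · refine le_antisymm (L.mkContinuous_norm_le hMr0 hLle) ?_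
    by_contra hlt
    push_neg at hlt
    obtain ⟨c, hc1, hc2⟩ := exists_between hlt
    have hc0 : (0:ℝ) ≤ c := le_trans (norm_nonneg U) hc1.le
    have hA : μ {ω | c < ‖T ω‖} ≠ 0 := by
      intro h0
      have hae : ∀ᵐ ω ∂μ, ‖T ω‖ ≤ c := by
        rw [ae_iff]
        simpa [not_le] using h0
      have hle : Minf ≤ ENNReal.ofReal c := by
        refine essSup_le_of_ae_le _ (hae.mono fun ω h => ?_)
        dsimp only
        rw [← enorm_eq_nnnorm, ← ofReal_norm]
        exact ENNReal.ofReal_le_ofReal h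
      have : Mr ≤ c := by
        have h2 := ENNReal.toReal_mono ENNReal.ofReal_ne_top hle
        rwa [ENNReal.toReal_ofReal hc0] at h2
      linarith
    haveI : Nonempty H := ⟨0⟩
    set v := TopologicalSpace.denseSeq H with hvdef
    have hv : DenseRange v := TopologicalSpace.denseRange_denseSeq H
    have hsub : {ω | c < ‖T ω‖} ⊆ ⋃ n, {ω | c * ‖v n‖ < ‖T ω (v n)‖} := by
      intro ω hω
      simp only [Set.mem_setOf_eq] at hω
      have hx : ∃ x, ¬ ‖T ω x‖ ≤ c * ‖x‖ := by
        by_contra hall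
        push_neg at hall
        exact absurd ((T ω).opNorm_le_bound hc0 fun x => hall x) (not_le.2 hω)
      obtain ⟨x, hx⟩ := hx
      have hopen : IsOpen {y : H | c * ‖y‖ < ‖T ω y‖} :=
        isOpen_lt (continuous_const.mul continuous_norm) ((T ω).continuous.norm)
      obtain ⟨n, hn⟩ := hv.exists_mem_open hopen ⟨x, not_le.1 hx⟩
      exact Set.mem_iUnion.2 ⟨n, hn⟩
    have hex : ∃ n, μ {ω | c * ‖v n‖ < ‖T ω (v n)‖} ≠ 0 := by
      by_contra hall
      push_neg at hall
      exact hA (measure_mono_null hsub (measure_iUnion_null hall))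
    obtain ⟨n, hn⟩ := hex
    set a := v n with hadef
    have hBmeas : MeasurableSet {ω | c * ‖a‖ < ‖T ω a‖} :=
      measurableSet_lt measurable_const (hTsm a).norm.measurable
    obtain ⟨t, htm, hts, htpos, htfin⟩ :=
      Measure.exists_subset_measure_lt_top hBmeas (pos_iff_ne_zero.2 hn)
    set φ₀ : Ω → H := t.indicator (fun ω => projCLM (J ω) a) with hφ₀def
    have hφ₀sm : StronglyMeasurable φ₀ := (hPsm a).indicator htm
    have hφ₀mem : MemLp φ₀ 2 μ := by
      have hind : MemLp (t.indicator fun _ => a) 2 μ :=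
        memLp_indicator_const 2 htm a (Or.inr htfin.ne)
      refine MemLp.of_le hind hφ₀sm.aestronglyMeasurable (Filter.Eventually.of_forall fun ω => ?_)
      by_cases hω : ω ∈ t
      · simp only [hφ₀def, Set.indicator_of_mem hω]
        exact projCLM_norm_le (hJclosed ω) a
      · simp [hφ₀def, Set.indicator_of_notMem hω]
    set Φlp : Lp H 2 μ := hφ₀mem.toLp φ₀ with hΦlpdef
    have hΦW : Φlp ∈ rangeSubmodule μ J := by
      show ∀ᵐ ω ∂μ, (Φlp : Ω → H) ω ∈ J ω
      filter_upwards [MemLp.coeFn_toLp hφ₀mem] with ω e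
      rw [e]
      by_cases hω : ω ∈ t
      · simp only [hφ₀def, Set.indicator_of_mem hω]
        exact projCLM_apply_mem (hJclosed ω) a
      · simp only [hφ₀def, Set.indicator_of_notMem hω]
        exact (J ω).zero_mem
    set Φ : rangeSubmodule μ J := ⟨Φlp, hΦW⟩ with hΦdef
    have hnz : ∀ ω ∈ t, φ₀ ω ≠ 0 := by
      intro ω hω
      have hωB : c * ‖a‖ < ‖T ω a‖ := hts hω
      have hproj : φ₀ ω = projCLM (J ω) a := Set.indicator_of_mem hω _
      intro h0
      have : T ω a = 0 := by
        show R ω (projCLM (J ω) a) = 0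
        rw [← hproj, h0, map_zero]
      rw [this] at hωB
      simp only [norm_zero] at hωB
      nlinarith [norm_nonneg a, hωB]
    have hpt : ∀ᵐ ω ∂μ, c * ‖(Φlp : Ω → H) ω‖ ≤ ‖(U Φ : Lp H 2 μ) ω‖ := by
      have h1 : ⇑(U Φ) =ᵐ[μ] fun ω => T ω ((Φlp : Ω → H) ω) := by
        rw [hUapply Φ]; exact MemLp.coeFn_toLp _
      filter_upwards [h1, MemLp.coeFn_toLp hφ₀mem] with ω e1 e2
      rw [e1, e2]
      by_cases hω : ω ∈ t
      · have hωB : c * ‖a‖ < ‖T ω a‖ := hts hω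
        have hproj : φ₀ ω = projCLM (J ω) a := Set.indicator_of_mem hω _
        have hTφ : T ω (φ₀ ω) = T ω a := by
          rw [hproj]
          show R ω (projCLM (J ω) (projCLM (J ω) a)) = R ω (projCLM (J ω) a)
          rw [projCLM_apply_of_mem (hJclosed ω) (projCLM_apply_mem (hJclosed ω) a)]
        rw [hTφ, hproj]
        calc c * ‖projCLM (J ω) a‖ ≤ c * ‖a‖ :=
              mul_le_mul_of_nonneg_left (projCLM_norm_le (hJclosed ω) a) hc0
          _ ≤ ‖T ω a‖ := hωB.le
      · simp [hφ₀def, Set.indicator_of_notMem hω]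
    have hΦnorm : ‖Φ‖ = (eLpNorm φ₀ 2 μ).toReal := by
      have : ‖Φ‖ = ‖Φlp‖ := rfl
      rw [this, hΦlpdef, Lp.norm_toLp]
    have hΦpos : 0 < ‖Φ‖ := by
      rw [hΦnorm]
      refine ENNReal.toReal_pos ?_ hφ₀mem.2.ne
      intro h0
      have hzero : φ₀ =ᵐ[μ] 0 :=
        (eLpNorm_eq_zero_iff hφ₀sm.aestronglyMeasurable two_ne_zero).1 h0
      have : t ⊆ {ω | φ₀ ω ≠ 0} := fun ω hω => hnz ω hω
      have hμt : μ t = 0 :=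
        measure_mono_null this hzero
      exact absurd hμt (pos_iff_ne_zero.1 htpos)
    have hnorm : c * ‖Φ‖ ≤ ‖U Φ‖ := by
      have h1 : eLpNorm (c • ⇑Φlp) 2 μ ≤ eLpNorm (⇑(U Φ)) 2 μ := by
        apply eLpNorm_mono_ae
        filter_upwards [hpt] with ω h
        rw [Pi.smul_apply, norm_smul, Real.norm_eq_abs, abs_of_nonneg hc0]
        exact h
      have h2 : eLpNorm (c • ⇑Φlp) 2 μ = (‖c‖₊ : ℝ≥0∞) * eLpNorm (⇑Φlp) 2 μ :=
        eLpNorm_const_smul c _ 2 μ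
      have h3 : ‖U Φ‖ = (eLpNorm (⇑(U Φ)) 2 μ).toReal := Lp.norm_def _
      have h4 : ‖Φ‖ = (eLpNorm (⇑Φlp) 2 μ).toReal := rfl
      rw [h3, h4]
      have h5 := ENNReal.toReal_mono (Lp.eLpNorm_ne_top (U Φ)) h1
      rw [h2, ENNReal.toReal_mul, ENNReal.coe_toReal, coe_nnnorm, Real.norm_eq_abs,
        abs_of_nonneg hc0] at h5
      exact h5
    have hop := U.le_opNorm Φ
    nlinarith [hnorm, hΦpos, hc1, hop]
end
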